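/- Conditional convergence of momentum Frank–Wolfe with polynomially decaying gradient-surrogate error (deterministic skeleton of the Acc-SZOFW* analysis): let T ≥ 2 be an integer, take the step size η = T^{−2/3}, and suppose there are ε₀ ≥ 0 and K ≥ 0 with ‖∇f(z_t) − v_t‖ ≤ ε₀ + K (t+1)^{−1/3} for all 0 ≤ t ≤ T−1. Then (1/T) ∑_{t=1}^{T−1} G(z_t) ≤ (f(z_0) − inf_{y∈X} f(y))/T^{1/3} + 4LD²/T^{2/3} + 2Dε₀ + 3DK/T^{1/3} + D(ε₀ + K)(ln T)/T. -/

import Mathlib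

/-!
Write `δ t = x t - y t`. The recursions give `z (t+1) - z t = η (w t - z t) + δ (t+1) / (t+2)` and
`(t+1) δ (t+1) = (1 - η) t δ t + η (w t - x t) / (t+2)`, so `(t+1) δ (t+1)` is a nonnegative
combination of the directions `w s - x s`, `s ≤ t`, of total weight at most `η (H_{t+2} - 1)`.
Against `∇f (z t)` each direction is at most `D (L D + ε)`, because `⟪v s, w s - x s⟫ ≤ 0` by the
choice of `w s`; this controls the momentum term without any bound on `∇f`. Against `δ` itself it
gives `‖δ (t+1)‖ ≤ η D / 2`, hence `‖z (t+1) - z t‖ ≤ 5 η D / 4`. The descent lemma then yields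
`η G (z t) ≤ f (z t) - f (z (t+1)) + 2 D η ε_t + (momentum term) + 25 L η² D² / 32`. Summing,
`∑ (t+1)^(-1/3) ≤ 3 T^(2/3) / 2`, the momentum weights add up to at most `1 - 1/T ≤ log T`, and
dividing by `η T = T^(1/3)` gives the bound.
-/

open scoped RealInnerProductSpace

/-- The Frank–Wolfe (duality) gap of `f` over `X` at `x`:
`G(x) = sup_{w ∈ X} ⟪w − x, −∇f(x)⟫`. -/
noncomputable def fwGap {d : ℕ} (f : EuclideanSpace ℝ (Fin d) → ℝ)
    (X : Set (EuclideanSpace ℝ (Fin d))) (x : EuclideanSpace ℝ (Fin d)) : ℝ :=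
  sSup ((fun w => ⟪w - x, -gradient f x⟫) '' X)

open Finset

theorem le_add_inner_gradient_add_sq {E : Type*} [NormedAddCommGroup E] [InnerProductSpace ℝ E]
    [CompleteSpace E] {f : E → ℝ} {L : ℝ} (hf : Differentiable ℝ f)
    (hLip : ∀ u v, ‖gradient f u - gradient f v‖ ≤ L * ‖u - v‖) (a b : E) :
    f b ≤ f a + ⟪gradient f a, b - a⟫ + L / 2 * ‖b - a‖ ^ 2 := by
  set c : ℝ → E := fun s => a + s • (b - a) with hc
  have hc' : ∀ s, HasDerivAt c (b - a) s := fun s =>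
    (((hasDerivAt_id' s).smul_const (b - a)).const_add a).congr_deriv (one_smul ℝ _)
  have hfc : ∀ s, HasDerivAt (f ∘ c) ⟪gradient f (c s), b - a⟫ s := fun s => by
    simpa [InnerProductSpace.toDual_apply_apply] using
      (hf (c s)).hasGradientAt.hasFDerivAt.comp_hasDerivAt s (hc' s)
  have hparab : ∀ s,
      HasDerivAt (fun s => f a + s * ⟪gradient f a, b - a⟫ + L / 2 * s ^ 2 * ‖b - a‖ ^ 2)
      (⟪gradient f a, b - a⟫ + L * s * ‖b - a‖ ^ 2) s := fun s =>
    ((((hasDerivAt_id' s).mul_const _).const_add (f a)).add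
      (((hasDerivAt_pow 2 s).const_mul (L / 2)).mul_const _)).congr_deriv (by push_cast; ring)
  have hslope : ∀ s ∈ Set.Ico (0 : ℝ) 1,
      ⟪gradient f (c s), b - a⟫ ≤ ⟪gradient f a, b - a⟫ + L * s * ‖b - a‖ ^ 2 := by
    rintro s ⟨hs0, -⟩
    have hcs : ‖c s - a‖ = s * ‖b - a‖ := by
      simp [hc, norm_smul, abs_of_nonneg hs0]
    calc ⟪gradient f (c s), b - a⟫
        = ⟪gradient f a, b - a⟫ + ⟪gradient f (c s) - gradient f a, b - a⟫ := by
          rw [inner_sub_left]; ring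
      _ ≤ ⟪gradient f a, b - a⟫ + L * ‖c s - a‖ * ‖b - a‖ := by
          gcongr
          exact (real_inner_le_norm _ _).trans
            (mul_le_mul_of_nonneg_right (hLip _ _) (norm_nonneg _))
      _ = ⟪gradient f a, b - a⟫ + L * s * ‖b - a‖ ^ 2 := by rw [hcs]; ring
  have hfence := image_le_of_deriv_right_le_deriv_boundary
    (fun s _ => (hfc s).continuousAt.continuousWithinAt)
    (fun s _ => (hfc s).hasDerivWithinAt) (by simp [hc])
    (fun s _ => (hparab s).continuousAt.continuousWithinAt)
    (fun s _ => (hparab s).hasDerivWithinAt) hslope (Set.right_mem_Icc.2 zero_le_one)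
  simpa [hc] using hfence

theorem sum_rpow_neg_le {p : ℝ} (hp0 : 0 ≤ p) (hp1 : p < 1) (n : ℕ) :
    (1 - p) * ∑ t ∈ range n, ((t : ℝ) + 1) ^ (-p) ≤ (n : ℝ) ^ (1 - p) := by
  have hterm : ∀ t : ℕ, (1 - p) * ((t : ℝ) + 1) ^ (-p)
      ≤ ((t : ℝ) + 1) ^ (1 - p) - (t : ℝ) ^ (1 - p) := by
    intro t
    have ht : (0 : ℝ) < t + 1 := by positivity
    -- Bernoulli's inequality at `1 + s = t / (t + 1)`
    have hbern := rpow_one_add_le_one_add_mul_self (s := -1 / ((t : ℝ) + 1))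
      (by rw [neg_div, neg_le_neg_iff, div_le_one ht]; linarith [t.cast_nonneg (α := ℝ)])
      (by linarith : 0 ≤ 1 - p) (by linarith : 1 - p ≤ 1)
    rw [show 1 + -1 / ((t : ℝ) + 1) = t / (t + 1) by field_simp; ring,
      Real.div_rpow t.cast_nonneg ht.le, div_le_iff₀ (by positivity)] at hbern
    have hsub : ((t : ℝ) + 1) ^ (-p) = ((t : ℝ) + 1) ^ (1 - p) / (t + 1) := by
      rw [← Real.rpow_sub_one ht.ne']; ring_nf
    rw [hsub]
    calc (1 - p) * (((t : ℝ) + 1) ^ (1 - p) / (t + 1))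
        = ((t : ℝ) + 1) ^ (1 - p) - (1 + (1 - p) * (-1 / (t + 1))) * ((t : ℝ) + 1) ^ (1 - p) := by
          field_simp; ring
      _ ≤ ((t : ℝ) + 1) ^ (1 - p) - (t : ℝ) ^ (1 - p) := by linarith
  calc (1 - p) * ∑ t ∈ range n, ((t : ℝ) + 1) ^ (-p)
      ≤ ∑ t ∈ range n, (((t + 1 : ℕ) : ℝ) ^ (1 - p) - (t : ℝ) ^ (1 - p)) := by
        rw [mul_sum]; exact sum_le_sum fun t _ => by push_cast; exact hterm t
    _ = (n : ℝ) ^ (1 - p) := by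
        rw [sum_range_sub (fun t : ℕ => (t : ℝ) ^ (1 - p))]
        simp [Real.zero_rpow (by linarith : (1 - p) ≠ 0)]

theorem sum_decaying_le {ε₀ K : ℝ} (hK : 0 ≤ K) (n : ℕ) :
    ∑ t ∈ range n, (ε₀ + K * ((t : ℝ) + 1) ^ (-(1 / 3 : ℝ)))
      ≤ n * ε₀ + 3 / 2 * K * (n : ℝ) ^ ((2 : ℝ) / 3) := by
  have := sum_rpow_neg_le (p := 1 / 3) (by norm_num) (by norm_num) n
  rw [sum_add_distrib, sum_const, card_range, nsmul_eq_mul, ← mul_sum]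
  norm_num at this ⊢
  nlinarith

noncomputable def shiftedHarmonic (n : ℕ) : ℝ := ∑ s ∈ range n, 1 / ((s : ℝ) + 2)

theorem shiftedHarmonic_succ (n : ℕ) :
    shiftedHarmonic (n + 1) = shiftedHarmonic n + 1 / ((n : ℝ) + 2) :=
  sum_range_succ _ n

theorem shiftedHarmonic_nonneg (n : ℕ) : 0 ≤ shiftedHarmonic n :=
  sum_nonneg fun _ _ => by positivity

theorem shiftedHarmonic_le_half (n : ℕ) : shiftedHarmonic n ≤ n / 2 :=
  calc shiftedHarmonic n ≤ ∑ _s ∈ range n, (1 / 2 : ℝ) :=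
        sum_le_sum fun s _ =>
          one_div_le_one_div_of_le two_pos (by linarith [s.cast_nonneg (α := ℝ)])
    _ = n / 2 := by simp [div_eq_mul_inv]

theorem sum_shiftedHarmonic_div_add (n : ℕ) :
    ∑ t ∈ range n, shiftedHarmonic (t + 1) / (((t : ℝ) + 1) * ((t : ℝ) + 2))
      + (1 + shiftedHarmonic n) / ((n : ℝ) + 1) = 1 := by
  induction n with
  | zero => simp [shiftedHarmonic]
  | succ n ih =>
    have hstep : shiftedHarmonic (n + 1) / (((n : ℝ) + 1) * ((n : ℝ) + 2))
        + (1 + shiftedHarmonic (n + 1)) / (((n + 1 : ℕ) : ℝ) + 1)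
        = (1 + shiftedHarmonic n) / ((n : ℝ) + 1) := by
      rw [shiftedHarmonic_succ]
      push_cast
      field_simp
      ring
    rw [sum_range_succ]
    linarith

theorem sum_shiftedHarmonic_div_le {n : ℕ} (hn : 2 ≤ n) :
    ∑ t ∈ range n, shiftedHarmonic (t + 1) / (((t : ℝ) + 1) * ((t : ℝ) + 2)) ≤ 1 - 1 / n := by
  have hhalf : 1 / (((0 : ℕ) : ℝ) + 2) ≤ shiftedHarmonic n :=
    single_le_sum (f := fun s : ℕ => 1 / ((s : ℝ) + 2)) (fun s _ => by positivity)
      (mem_range.2 (by omega))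
  norm_num at hhalf
  have hn' : (2 : ℝ) ≤ n := by exact_mod_cast hn
  have : 1 / (n : ℝ) ≤ (1 + shiftedHarmonic n) / (n + 1) := by
    rw [div_le_div_iff₀ (by positivity) (by positivity)]
    nlinarith
  linarith [sum_shiftedHarmonic_div_add n]

theorem rpow_neg_two_thirds_le {T : ℝ} (hT : 2 ≤ T) : T ^ (-(2 / 3 : ℝ)) ≤ 2 / 3 := by
  have hT0 : 0 < T := by linarith
  rw [← pow_le_pow_iff_left₀ (by positivity) (by norm_num) (by norm_num : 3 ≠ 0),
    ← Real.rpow_natCast, ← Real.rpow_mul hT0.le,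
    show (-(2 / 3 : ℝ) * ((3 : ℕ) : ℝ)) = -((2 : ℕ) : ℝ) by norm_num, Real.rpow_neg hT0.le,
    Real.rpow_natCast, inv_le_comm₀ (by positivity) (by norm_num)]
  nlinarith

section Iterates

variable {E : Type*} [NormedAddCommGroup E] [InnerProductSpace ℝ E]

-- `γ_t = (1 + θ_t) η` and `α_{t+1} = 1 / (t + 2)` in the notation of the paper.
structure IsMomentumFW (X : Set E) (η : ℝ) (v x y z w : ℕ → E) : Prop where
  x_zero : x 0 = z 0
  z_zero_mem : z 0 ∈ X
  w_mem : ∀ t, w t ∈ X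
  w_isLMO : ∀ t, ∀ w' ∈ X, ⟪w', -v t⟫ ≤ ⟪w t, -v t⟫
  x_succ : ∀ t : ℕ, x (t + 1)
    = x t + ((1 + 1 / (((t : ℝ) + 1) * ((t : ℝ) + 2))) * η) • (w t - x t)
  y_succ : ∀ t : ℕ, y (t + 1) = z t + η • (w t - z t)
  z_succ : ∀ t : ℕ, z (t + 1)
    = (1 - 1 / ((t : ℝ) + 2)) • y (t + 1) + (1 / ((t : ℝ) + 2)) • x (t + 1)

namespace IsMomentumFW

variable {X : Set E} {η D : ℝ} {v x y z w : ℕ → E}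

theorem mem (h : IsMomentumFW X η v x y z w) (hX : Convex ℝ X) (hη0 : 0 ≤ η) (hη : η ≤ 2 / 3)
    (t : ℕ) : x t ∈ X ∧ z t ∈ X := by
  induction t with
  | zero => exact ⟨h.x_zero ▸ h.z_zero_mem, h.z_zero_mem⟩
  | succ t ih =>
    have hθ : 1 / (((t : ℝ) + 1) * ((t : ℝ) + 2)) ≤ 1 / 2 :=
      one_div_le_one_div_of_le two_pos (by nlinarith [t.cast_nonneg (α := ℝ)])
    have hx : x (t + 1) ∈ X := by
      rw [h.x_succ]
      refine hX.add_smul_sub_mem ih.1 (h.w_mem t) ⟨by positivity, ?_⟩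
      nlinarith
    have hy : y (t + 1) ∈ X := by
      rw [h.y_succ]
      exact hX.add_smul_sub_mem ih.2 (h.w_mem t) ⟨hη0, by linarith⟩
    have hα : 1 / ((t : ℝ) + 2) ≤ 1 := (div_le_one (by positivity)).2 (by linarith)
    refine ⟨hx, ?_⟩
    rw [h.z_succ]
    exact hX hy hx (by linarith) (by positivity) (by ring)

theorem z_eq (h : IsMomentumFW X η v x y z w) (t : ℕ) :
    z t = (1 - 1 / ((t : ℝ) + 1)) • y t + (1 / ((t : ℝ) + 1)) • x t := by
  cases t with
  | zero => simp [h.x_zero]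
  | succ t =>
    rw [h.z_succ t]
    push_cast
    ring_nf

theorem smul_x_sub_y_succ (h : IsMomentumFW X η v x y z w) (t : ℕ) :
    ((t : ℝ) + 1) • (x (t + 1) - y (t + 1))
      = (1 - η) • ((t : ℝ) • (x t - y t)) + (η / ((t : ℝ) + 2)) • (w t - x t) := by
  rw [h.x_succ, h.y_succ, h.z_eq t]
  match_scalars <;> field_simp <;> ring

theorem mul_inner_x_sub_y_le (h : IsMomentumFW X η v x y z w) (hη0 : 0 ≤ η) (hη1 : η ≤ 1) {g : E}
    {M : ℝ} (hM : 0 ≤ M) {t : ℕ} (hg : ∀ s < t, ⟪g, w s - x s⟫ ≤ M) :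
    t * ⟪g, x t - y t⟫ ≤ η * M * shiftedHarmonic t := by
  induction t with
  | zero => simp [shiftedHarmonic]
  | succ t ih =>
    have hrec := congrArg (fun u => ⟪g, u⟫) (h.smul_x_sub_y_succ t)
    simp only [inner_add_right, real_inner_smul_right] at hrec
    have h1 := mul_le_mul_of_nonneg_left (ih fun s hs => hg s (by omega)) (sub_nonneg.2 hη1)
    have h2 := mul_le_mul_of_nonneg_left (hg t (by omega)) (by positivity : 0 ≤ η / ((t : ℝ) + 2))
    have h3 : 0 ≤ η * (η * M * shiftedHarmonic t) := by
      have := shiftedHarmonic_nonneg t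
      positivity
    rw [shiftedHarmonic_succ]
    push_cast
    linear_combination hrec + h1 + h2 + h3

theorem norm_x_sub_y_succ_le (h : IsMomentumFW X η v x y z w) (hX : Convex ℝ X) (hη0 : 0 ≤ η)
    (hη : η ≤ 2 / 3) (hD : 0 ≤ D) (hdiam : ∀ u ∈ X, ∀ u' ∈ X, ‖u - u'‖ ≤ D) (t : ℕ) :
    ‖x (t + 1) - y (t + 1)‖ ≤ η * D / 2 := by
  set δ := x (t + 1) - y (t + 1)
  -- test the weight bound against `δ` itself
  have hinner := h.mul_inner_x_sub_y_le hη0 (by linarith) (mul_nonneg (norm_nonneg δ) hD)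
    (g := δ) (t := t + 1) fun s _ => (real_inner_le_norm _ _).trans
      (mul_le_mul_of_nonneg_left (hdiam _ (h.w_mem s) _ (h.mem hX hη0 hη s).1) (norm_nonneg _))
  rw [real_inner_self_eq_norm_sq] at hinner
  have hsq : ((t : ℝ) + 1) * (‖δ‖ * ‖δ‖) ≤ ((t : ℝ) + 1) * (‖δ‖ * (η * D / 2)) := by
    have := mul_le_mul_of_nonneg_left (shiftedHarmonic_le_half (t + 1))
      (by positivity : 0 ≤ η * (‖δ‖ * D))
    push_cast at hinner this
    linear_combination hinner + this
  rcases (norm_nonneg δ).eq_or_lt with h0 | hpos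
  · rw [← h0]
    positivity
  · exact le_of_mul_le_mul_left (le_of_mul_le_mul_left hsq (by positivity)) hpos

theorem z_succ_sub (h : IsMomentumFW X η v x y z w) (t : ℕ) :
    z (t + 1) - z t = η • (w t - z t) + (1 / ((t : ℝ) + 2)) • (x (t + 1) - y (t + 1)) := by
  rw [h.z_succ, h.y_succ]
  module

theorem norm_z_succ_sub_le (h : IsMomentumFW X η v x y z w) (hX : Convex ℝ X) (hη0 : 0 ≤ η)
    (hη : η ≤ 2 / 3) (hD : 0 ≤ D) (hdiam : ∀ u ∈ X, ∀ u' ∈ X, ‖u - u'‖ ≤ D) (t : ℕ) :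
    ‖z (t + 1) - z t‖ ≤ 5 / 4 * η * D := by
  have hα : 1 / ((t : ℝ) + 2) ≤ 1 / 2 :=
    one_div_le_one_div_of_le two_pos (by linarith [t.cast_nonneg (α := ℝ)])
  have hwz := mul_le_mul_of_nonneg_left (hdiam _ (h.w_mem t) _ (h.mem hX hη0 hη t).2) hη0
  have hδ := mul_le_mul hα (h.norm_x_sub_y_succ_le hX hη0 hη hD hdiam t) (norm_nonneg _)
    (by norm_num)
  rw [h.z_succ_sub]
  refine (norm_add_le _ _).trans ?_
  rw [norm_smul, norm_smul, Real.norm_of_nonneg hη0, Real.norm_of_nonneg (by positivity)]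
  linarith

theorem inner_gradient_w_sub_x_le [CompleteSpace E] (h : IsMomentumFW X η v x y z w)
    (hX : Convex ℝ X) (hη0 : 0 ≤ η) (hη : η ≤ 2 / 3) (hdiam : ∀ u ∈ X, ∀ u' ∈ X, ‖u - u'‖ ≤ D)
    {f : E → ℝ} {L ε : ℝ} (hL : 0 ≤ L)
    (hLip : ∀ u u', ‖gradient f u - gradient f u'‖ ≤ L * ‖u - u'‖) (s t : ℕ)
    (herr : ‖gradient f (z s) - v s‖ ≤ ε) :
    ⟪gradient f (z t), w s - x s⟫ ≤ D * (L * D + ε) := by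
  have hmem := h.mem hX hη0 hη
  have hv : ⟪v s, w s - x s⟫ ≤ 0 := by
    have := h.w_isLMO s (x s) (hmem s).1
    simp only [inner_sub_right, inner_neg_right, real_inner_comm (v s)] at this ⊢
    linarith
  have hgrad : ‖gradient f (z t) - v s‖ ≤ L * D + ε :=
    calc ‖gradient f (z t) - v s‖
        ≤ ‖gradient f (z t) - gradient f (z s)‖ + ‖gradient f (z s) - v s‖ :=
          norm_sub_le_norm_sub_add_norm_sub _ _ _
      _ ≤ L * D + ε := add_le_add ((hLip _ _).trans
          (mul_le_mul_of_nonneg_left (hdiam _ (hmem t).2 _ (hmem s).2) hL)) herr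
  calc ⟪gradient f (z t), w s - x s⟫
      = ⟪gradient f (z t) - v s, w s - x s⟫ + ⟪v s, w s - x s⟫ := by
        rw [inner_sub_left]; ring
    _ ≤ (L * D + ε) * D + 0 := add_le_add ((real_inner_le_norm _ _).trans
        (mul_le_mul hgrad (hdiam _ (h.w_mem s) _ (hmem s).1) (norm_nonneg _)
          ((norm_nonneg _).trans hgrad))) hv
    _ = D * (L * D + ε) := by ring

end IsMomentumFW

end Iterates

section FrankWolfeGap

variable {d : ℕ} {f : EuclideanSpace ℝ (Fin d) → ℝ} {X : Set (EuclideanSpace ℝ (Fin d))} {D : ℝ}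

theorem fwGap_nonneg (hX : IsCompact X) {u : EuclideanSpace ℝ (Fin d)} (hu : u ∈ X) :
    0 ≤ fwGap f X u :=
  le_csSup (hX.image (by fun_prop)).bddAbove ⟨u, hu, by simp⟩

theorem fwGap_le_inner_add (hdiam : ∀ u ∈ X, ∀ u' ∈ X, ‖u - u'‖ ≤ D)
    {u w v : EuclideanSpace ℝ (Fin d)} (hu : u ∈ X) (hw : w ∈ X)
    (hlmo : ∀ w' ∈ X, ⟪w', -v⟫ ≤ ⟪w, -v⟫) :
    fwGap f X u ≤ ⟪gradient f u, u - w⟫ + 2 * D * ‖gradient f u - v‖ := by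
  have hdev : ∀ a ∈ X, |⟪a - u, gradient f u - v⟫| ≤ D * ‖gradient f u - v‖ := fun a ha =>
    (abs_real_inner_le_norm _ _).trans
      (mul_le_mul_of_nonneg_right (hdiam _ ha _ hu) (norm_nonneg _))
  refine csSup_le ⟨_, w, hw, rfl⟩ ?_
  rintro _ ⟨w', hw', rfl⟩
  have hsplit : ⟪w' - u, -gradient f u⟫ = (⟪w', -v⟫ - ⟪w, -v⟫) + ⟪gradient f u, u - w⟫
      + ⟪w - u, gradient f u - v⟫ - ⟪w' - u, gradient f u - v⟫ := by
    simp only [inner_sub_left, inner_sub_right, inner_neg_right, real_inner_comm]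
    ring
  linarith [hlmo w' hw', abs_le.1 (hdev w' hw'), abs_le.1 (hdev w hw)]

namespace IsMomentumFW

variable {η : ℝ} {v x y z w : ℕ → EuclideanSpace ℝ (Fin d)}

theorem mul_fwGap_le (h : IsMomentumFW X η v x y z w) (hX : Convex ℝ X) (hη0 : 0 ≤ η)
    (hη : η ≤ 2 / 3) (hD : 0 ≤ D) (hdiam : ∀ u ∈ X, ∀ u' ∈ X, ‖u - u'‖ ≤ D) {L ε : ℝ}
    (hL : 0 ≤ L) (hf : Differentiable ℝ f)
    (hLip : ∀ u u', ‖gradient f u - gradient f u'‖ ≤ L * ‖u - u'‖) (t : ℕ)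
    (herr : ∀ s ≤ t, ‖gradient f (z s) - v s‖ ≤ ε) :
    η * fwGap f X (z t) ≤ f (z t) - f (z (t + 1)) + 2 * D * η * ‖gradient f (z t) - v t‖
      + η * D * (L * D + ε) * (shiftedHarmonic (t + 1) / (((t : ℝ) + 1) * ((t : ℝ) + 2)))
      + 25 / 32 * L * η ^ 2 * D ^ 2 := by
  have hmem := h.mem hX hη0 hη
  have hgap := mul_le_mul_of_nonneg_left
    (fwGap_le_inner_add (f := f) hdiam (hmem t).2 (h.w_mem t) (h.w_isLMO t)) hη0
  have hε : 0 ≤ ε := (norm_nonneg _).trans (herr 0 (Nat.zero_le _))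
  have hmom := h.mul_inner_x_sub_y_le hη0 (by linarith) (by positivity : 0 ≤ D * (L * D + ε))
    (g := gradient f (z t)) (t := t + 1)
    fun s hs => h.inner_gradient_w_sub_x_le hX hη0 hη hdiam hL hLip s t (herr s (by omega))
  have hmom' : 1 / ((t : ℝ) + 2) * ⟪gradient f (z t), x (t + 1) - y (t + 1)⟫
      ≤ η * D * (L * D + ε) * (shiftedHarmonic (t + 1) / (((t : ℝ) + 1) * ((t : ℝ) + 2))) := by
    push_cast at hmom
    rw [show η * D * (L * D + ε) * (shiftedHarmonic (t + 1) / (((t : ℝ) + 1) * ((t : ℝ) + 2)))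
        = 1 / ((t : ℝ) + 2) * (η * (D * (L * D + ε)) * shiftedHarmonic (t + 1) / ((t : ℝ) + 1))
        by field_simp]
    gcongr
    rw [le_div_iff₀ (by positivity)]
    linarith
  have hquad : L / 2 * ‖z (t + 1) - z t‖ ^ 2 ≤ 25 / 32 * L * η ^ 2 * D ^ 2 :=
    calc L / 2 * ‖z (t + 1) - z t‖ ^ 2 ≤ L / 2 * (5 / 4 * η * D) ^ 2 := by
          gcongr
          exact h.norm_z_succ_sub_le hX hη0 hη hD hdiam t
      _ = 25 / 32 * L * η ^ 2 * D ^ 2 := by ring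
  have hdir : ⟪gradient f (z t), z (t + 1) - z t⟫ = -(η * ⟪gradient f (z t), z t - w t⟫)
      + 1 / ((t : ℝ) + 2) * ⟪gradient f (z t), x (t + 1) - y (t + 1)⟫ := by
    rw [h.z_succ_sub, inner_add_right, real_inner_smul_right, real_inner_smul_right,
      ← neg_sub (z t), inner_neg_right]
    ring
  linarith [le_add_inner_gradient_add_sq hf hLip (z t) (z (t + 1))]

theorem mul_sum_fwGap_le (h : IsMomentumFW X η v x y z w) (hX : Convex ℝ X) (hη0 : 0 ≤ η)
    (hη : η ≤ 2 / 3) (hD : 0 ≤ D) (hdiam : ∀ u ∈ X, ∀ u' ∈ X, ‖u - u'‖ ≤ D) {L : ℝ}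
    (hL : 0 ≤ L) (hf : Differentiable ℝ f)
    (hLip : ∀ u u', ‖gradient f u - gradient f u'‖ ≤ L * ‖u - u'‖) {T : ℕ} {ε : ℕ → ℝ}
    {ε' : ℝ} (herr : ∀ t < T, ‖gradient f (z t) - v t‖ ≤ ε t) (hε : ∀ t < T, ε t ≤ ε') :
    η * ∑ t ∈ range T, fwGap f X (z t) ≤ f (z 0) - f (z T) + 2 * D * η * ∑ t ∈ range T, ε t
      + η * D * (L * D + ε') *
        ∑ t ∈ range T, shiftedHarmonic (t + 1) / (((t : ℝ) + 1) * ((t : ℝ) + 2))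
      + T * (25 / 32 * L * η ^ 2 * D ^ 2) :=
  calc η * ∑ t ∈ range T, fwGap f X (z t)
      ≤ ∑ t ∈ range T, (f (z t) - f (z (t + 1)) + 2 * D * η * ε t
          + η * D * (L * D + ε') * (shiftedHarmonic (t + 1) / (((t : ℝ) + 1) * ((t : ℝ) + 2)))
          + 25 / 32 * L * η ^ 2 * D ^ 2) := by
        rw [mul_sum]
        refine sum_le_sum fun t ht => ?_
        have ht := mem_range.1 ht
        have hstep := h.mul_fwGap_le hX hη0 hη hD hdiam hL hf hLip t
          fun s hs => (herr s (by omega)).trans (hε s (by omega))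
        have := mul_le_mul_of_nonneg_left (herr t ht) (by positivity : 0 ≤ 2 * D * η)
        linarith
    _ = _ := by
        rw [sum_add_distrib, sum_add_distrib, sum_add_distrib, sum_range_sub', ← mul_sum,
          ← mul_sum, sum_const, card_range, nsmul_eq_mul]

theorem mul_sum_fwGap_le_of_decaying (h : IsMomentumFW X η v x y z w) (hXc : IsCompact X)
    (hX : Convex ℝ X) (hη0 : 0 ≤ η) (hη : η ≤ 2 / 3) (hD : 0 ≤ D)
    (hdiam : ∀ u ∈ X, ∀ u' ∈ X, ‖u - u'‖ ≤ D) {L : ℝ} (hL : 0 ≤ L) (hf : Differentiable ℝ f)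
    (hLip : ∀ u u', ‖gradient f u - gradient f u'‖ ≤ L * ‖u - u'‖) {T : ℕ} (hT : 2 ≤ T)
    {ε₀ K : ℝ} (hε₀ : 0 ≤ ε₀) (hK : 0 ≤ K)
    (herr : ∀ t < T, ‖gradient f (z t) - v t‖ ≤ ε₀ + K * ((t : ℝ) + 1) ^ (-(1 / 3 : ℝ))) :
    η * ∑ t ∈ Ico 1 T, fwGap f X (z t) ≤ f (z 0) - sInf (f '' X)
      + 2 * D * η * (T * ε₀ + 3 / 2 * K * (T : ℝ) ^ ((2 : ℝ) / 3)) + η * L * D ^ 2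
      + η * D * (ε₀ + K) * Real.log T + T * (25 / 32 * L * η ^ 2 * D ^ 2) := by
  have hmain := h.mul_sum_fwGap_le hX hη0 hη hD hdiam hL hf hLip herr (ε' := ε₀ + K)
    fun t _ => add_le_add_right (mul_le_of_le_one_right hK (Real.rpow_le_one_of_one_le_of_nonpos
      (le_add_of_nonneg_left t.cast_nonneg) (by norm_num : -(1 / 3 : ℝ) ≤ 0))) ε₀
  have hweights := sum_shiftedHarmonic_div_le hT
  have hlog : 1 - 1 / (T : ℝ) ≤ Real.log T := by
    simpa [one_div] using Real.one_sub_inv_le_log_of_pos (by positivity : (0 : ℝ) < T)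
  have hinf : sInf (f '' X) ≤ f (z T) :=
    csInf_le (hXc.image hf.continuous).bddBelow ⟨_, (h.mem hX hη0 hη T).2, rfl⟩
  have hIco : ∑ t ∈ Ico 1 T, fwGap f X (z t) ≤ ∑ t ∈ range T, fwGap f X (z t) := by
    rw [range_eq_Ico]
    exact sum_le_sum_of_subset_of_nonneg (Ico_subset_Ico (Nat.zero_le 1) le_rfl)
      fun t _ _ => fwGap_nonneg hXc (h.mem hX hη0 hη t).2
  have h1 := mul_le_mul_of_nonneg_left (sum_decaying_le (ε₀ := ε₀) hK T)
    (by positivity : 0 ≤ 2 * D * η)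
  have h2 := mul_le_mul_of_nonneg_left hweights (by positivity : 0 ≤ η * L * D ^ 2)
  have h3 := mul_le_mul_of_nonneg_left (hweights.trans hlog)
    (by positivity : 0 ≤ η * D * (ε₀ + K))
  have h4 := mul_le_mul_of_nonneg_left hIco hη0
  have h5 : 0 ≤ η * L * D ^ 2 * (1 / T) := by positivity
  linarith

theorem sum_fwGap_le_of_decaying (h : IsMomentumFW X η v x y z w) (hXc : IsCompact X)
    (hX : Convex ℝ X) (hη0 : 0 < η) (hη : η ≤ 2 / 3) (hD : 0 ≤ D)
    (hdiam : ∀ u ∈ X, ∀ u' ∈ X, ‖u - u'‖ ≤ D) {L : ℝ} (hL : 0 ≤ L) (hf : Differentiable ℝ f)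
    (hLip : ∀ u u', ‖gradient f u - gradient f u'‖ ≤ L * ‖u - u'‖) {T : ℕ} (hT : 2 ≤ T)
    {ε₀ K : ℝ} (hε₀ : 0 ≤ ε₀) (hK : 0 ≤ K)
    (herr : ∀ t < T, ‖gradient f (z t) - v t‖ ≤ ε₀ + K * ((t : ℝ) + 1) ^ (-(1 / 3 : ℝ))) :
    1 / (T : ℝ) * ∑ t ∈ Ico 1 T, fwGap f X (z t)
      ≤ (f (z 0) - sInf (f '' X)) / (η * T) + 2 * D * ε₀ + 3 * D * K * (T : ℝ) ^ ((2 : ℝ) / 3) / T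
        + L * D ^ 2 / T + 25 / 32 * L * η * D ^ 2 + D * (ε₀ + K) * Real.log T / T := by
  have hT0 : (0 : ℝ) < T := by positivity
  rw [← mul_le_mul_iff_of_pos_left (by positivity : 0 < η * T)]
  calc η * T * (1 / T * ∑ t ∈ Ico 1 T, fwGap f X (z t))
      = η * ∑ t ∈ Ico 1 T, fwGap f X (z t) := by field_simp
    _ ≤ _ := h.mul_sum_fwGap_le_of_decaying hXc hX hη0.le hη hD hdiam hL hf hLip hT hε₀ hK herr
    _ = _ := by field_simp; ring

end IsMomentumFW

end FrankWolfeGap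

theorem momentum_fw_convergence_decaying_error_general
    (d : ℕ)
    (X : Set (EuclideanSpace ℝ (Fin d)))
    (hXcomp : IsCompact X) (hXconv : Convex ℝ X)
    (D : ℝ) (hD : 0 < D)
    (hdiam : ∀ u ∈ X, ∀ v ∈ X, ‖u - v‖ ≤ D)
    (f : EuclideanSpace ℝ (Fin d) → ℝ)
    (L : ℝ) (hL : 0 < L)
    (hdiff : Differentiable ℝ f)
    (hLip : ∀ u v', ‖gradient f u - gradient f v'‖ ≤ L * ‖u - v'‖)
    (T : ℕ) (hT : 2 ≤ T)
    (η : ℝ) (hηdef : η = (T : ℝ) ^ (-(2 / 3 : ℝ)))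
    (x y z w v : ℕ → EuclideanSpace ℝ (Fin d))
    (hx0 : x 0 = z 0) (hz0 : z 0 ∈ X)
    (hwX : ∀ t, w t ∈ X)
    (hwopt : ∀ t, ∀ w' ∈ X, ⟪w', -(v t)⟫ ≤ ⟪w t, -(v t)⟫)
    (hxrec : ∀ t : ℕ, x (t + 1)
      = x t + ((1 + 1 / (((t : ℝ) + 1) * ((t : ℝ) + 2))) * η) • (w t - x t))
    (hyrec : ∀ t : ℕ, y (t + 1) = z t + η • (w t - z t))
    (hzrec : ∀ t : ℕ, z (t + 1)
      = (1 - 1 / ((t : ℝ) + 2)) • y (t + 1) + (1 / ((t : ℝ) + 2)) • x (t + 1))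
    (ε₀ K : ℝ) (hε₀ : 0 ≤ ε₀) (hK : 0 ≤ K)
    (herr : ∀ t : ℕ, t < T →
      ‖gradient f (z t) - v t‖ ≤ ε₀ + K * ((t : ℝ) + 1) ^ (-(1 / 3 : ℝ))) :
    (1 / (T : ℝ)) * ∑ t ∈ Finset.Ico 1 T, fwGap f X (z t)
      ≤ (f (z 0) - sInf (f '' X)) / (T : ℝ) ^ ((1 : ℝ) / 3)
        + 4 * L * D ^ 2 / (T : ℝ) ^ ((2 : ℝ) / 3)
        + 2 * D * ε₀ + 3 * D * K / (T : ℝ) ^ ((1 : ℝ) / 3)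
        + D * (ε₀ + K) * Real.log T / T := by
  have hT0 : (0 : ℝ) < T := by positivity
  have hη0 : 0 < η := hηdef ▸ by positivity
  have hfw : IsMomentumFW X η v x y z w := ⟨hx0, hz0, hwX, hwopt, hxrec, hyrec, hzrec⟩
  have hbound := hfw.sum_fwGap_le_of_decaying hXcomp hXconv hη0
    (hηdef ▸ rpow_neg_two_thirds_le (by exact_mod_cast hT)) hD.le hdiam hL.le hdiff hLip hT hε₀ hK
    herr
  have hηT : η * T = (T : ℝ) ^ ((1 : ℝ) / 3) := by
    rw [hηdef, ← Real.rpow_add_one hT0.ne']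
    norm_num
  have hK' : (T : ℝ) ^ ((2 : ℝ) / 3) / T = 1 / (T : ℝ) ^ ((1 : ℝ) / 3) := by
    rw [div_eq_div_iff hT0.ne' (by positivity), one_mul, ← Real.rpow_add hT0]
    norm_num
  have hLD : L * D ^ 2 / T + 25 / 32 * L * η * D ^ 2 ≤ 4 * L * D ^ 2 / (T : ℝ) ^ ((2 : ℝ) / 3) := by
    have hle : (T : ℝ) ^ ((2 : ℝ) / 3) ≤ T := by
      simpa using Real.rpow_le_rpow_of_exponent_le (by exact_mod_cast (by omega : 1 ≤ T))
        (by norm_num : (2 : ℝ) / 3 ≤ 1)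
    have : L * D ^ 2 / T ≤ L * D ^ 2 / (T : ℝ) ^ ((2 : ℝ) / 3) := by gcongr
    have hnonneg : 0 ≤ L * D ^ 2 / (T : ℝ) ^ ((2 : ℝ) / 3) := by positivity
    rw [hηdef, Real.rpow_neg hT0.le]
    linear_combination this + 71 / 32 * hnonneg
  rw [hηT, mul_div_assoc, hK'] at hbound
  linear_combination hbound + hLD

/-- Conditional convergence of momentum Frank–Wolfe with polynomially decaying
gradient-surrogate error (deterministic skeleton of the Acc-SZOFW* analysis). -/
theorem momentum_fw_convergence_decaying_error
    (d : ℕ) (hd : 1 ≤ d)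
    (X : Set (EuclideanSpace ℝ (Fin d))) (hXne : X.Nonempty)
    (hXcomp : IsCompact X) (hXconv : Convex ℝ X)
    (D : ℝ) (hD : 0 < D)
    (hdiam : ∀ u ∈ X, ∀ v ∈ X, ‖u - v‖ ≤ D)
    (f : EuclideanSpace ℝ (Fin d) → ℝ)
    (L : ℝ) (hL : 0 < L)
    (hdiff : Differentiable ℝ f)
    (hLip : ∀ u v', ‖gradient f u - gradient f v'‖ ≤ L * ‖u - v'‖)
    (T : ℕ) (hT : 2 ≤ T)
    (η : ℝ) (hηdef : η = (T : ℝ) ^ (-(2 / 3 : ℝ)))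
    (x y z w v : ℕ → EuclideanSpace ℝ (Fin d))
    (hx0 : x 0 = z 0) (hy0 : y 0 = z 0) (hz0 : z 0 ∈ X)
    (hwX : ∀ t, w t ∈ X)
    (hwopt : ∀ t, ∀ w' ∈ X, ⟪w', -(v t)⟫ ≤ ⟪w t, -(v t)⟫)
    (hxrec : ∀ t : ℕ, x (t + 1)
      = x t + ((1 + 1 / (((t : ℝ) + 1) * ((t : ℝ) + 2))) * η) • (w t - x t))
    (hyrec : ∀ t : ℕ, y (t + 1) = z t + η • (w t - z t))
    (hzrec : ∀ t : ℕ, z (t + 1)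
      = (1 - 1 / ((t : ℝ) + 2)) • y (t + 1) + (1 / ((t : ℝ) + 2)) • x (t + 1))
    (ε₀ K : ℝ) (hε₀ : 0 ≤ ε₀) (hK : 0 ≤ K)
    (herr : ∀ t : ℕ, t < T →
      ‖gradient f (z t) - v t‖ ≤ ε₀ + K * ((t : ℝ) + 1) ^ (-(1 / 3 : ℝ))) :
    (1 / (T : ℝ)) * ∑ t ∈ Finset.Ico 1 T, fwGap f X (z t)
      ≤ (f (z 0) - sInf (f '' X)) / (T : ℝ) ^ ((1 : ℝ) / 3)
        + 4 * L * D ^ 2 / (T : ℝ) ^ ((2 : ℝ) / 3)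
        + 2 * D * ε₀ + 3 * D * K / (T : ℝ) ^ ((1 : ℝ) / 3)
        + D * (ε₀ + K) * Real.log T / T :=
  momentum_fw_convergence_decaying_error_general d X hXcomp hXconv D hD hdiam f L hL hdiff hLip T hT
    η hηdef x y z w v hx0 hz0 hwX hwopt hxrec hyrec hzrec ε₀ K hε₀ hK herr
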